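/- Let I be a linearly ordered type and C a commutative ring containing ℚ. Let J be the ideal of MvPolynomial C P generated by the set {r(V1,V2,V3) | V1, V2, V3 nonempty words over I with V1 <dlex V3}, and let Sgood := {(V,W) ∈ P | V is a Lyndon word, and there do not exist nonempty words W1, W2 with W1 <dlex V such that W is the lexicographically greatest element of sh(W1,W2)}. Then every polynomial f ∈ MvPolynomial C P can be written as f = g + h where g belongs to the C-subalgebra Algebra.adjoin C {X p | p ∈ Sgood} and h ∈ J. Equivalently, the quotient C-algebra MvPolynomial C P ⧸ J is generated as a C-algebra by the images of the variables X p with p ∈ Sgood. (This is the case of the corollary on generators of the ring of constants C2 where the module of non-integrable elements is a free C-module with basis indexed by I, so that the symmetric algebra Sym(ε(M2)) is the polynomial ring MvPolynomial C P.) -/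

import Mathlib

open scoped Classical

/-- Degree-lexicographic strict order on words over a linearly ordered alphabet:
first compare lengths, then compare lexicographically. -/
def DlexLt {I : Type*} [LinearOrder I] (V W : List I) : Prop :=
  V.length < W.length ∨ (V.length = W.length ∧ V < W)

/-- Degree-lexicographic (non-strict) order on words. -/
def DlexLe {I : Type*} [LinearOrder I] (V W : List I) : Prop :=
  DlexLt V W ∨ V = W

theorem dlexLe_total {I : Type*} [LinearOrder I] (V W : List I) :
    DlexLe V W ∨ DlexLe W V := by
  rcases lt_trichotomy V.length W.length with h | h | h
  · exact Or.inl (Or.inl (Or.inl h))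
  · rcases lt_trichotomy V W with h' | h' | h'
    · exact Or.inl (Or.inl (Or.inr ⟨h, h'⟩))
    · exact Or.inl (Or.inr h')
    · exact Or.inr (Or.inl (Or.inr ⟨h.symm, h'⟩))
  · exact Or.inr (Or.inl (Or.inl h))

/-- The type `P` of pairs `(V, W)` of nonempty words with `V ≤dlex W`. -/
abbrev WordPair (I : Type*) [LinearOrder I] : Type _ :=
  {p : List I × List I // p.1 ≠ [] ∧ p.2 ≠ [] ∧ DlexLe p.1 p.2}

/-- `χ(A, B)`: the pair `(A, B)` normalized so that the first component is
`≤dlex` the second one. -/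
noncomputable def chi {I : Type*} [LinearOrder I] (A B : List I)
    (hA : A ≠ []) (hB : B ≠ []) : WordPair I :=
  if h : DlexLe A B then ⟨(A, B), hA, hB, h⟩
  else ⟨(B, A), hB, hA, (dlexLe_total A B).resolve_left h⟩

/-- The strict order `≺` on `WordPair I`, comparing `(V, W)` by the triple
`(V.length + W.length, V, W)` lexicographically (words compared by `dlex`). -/
def PairLt {I : Type*} [LinearOrder I] (p q : WordPair I) : Prop :=
  p.val.1.length + p.val.2.length < q.val.1.length + q.val.2.length ∨
  (p.val.1.length + p.val.2.length = q.val.1.length + q.val.2.length ∧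
    (DlexLt p.val.1 q.val.1 ∨ (p.val.1 = q.val.1 ∧ DlexLt p.val.2 q.val.2)))

/-- The order `≼` on `WordPair I`. -/
def PairLe {I : Type*} [LinearOrder I] (p q : WordPair I) : Prop :=
  PairLt p q ∨ p = q

/-- The multiset of shuffles of two words. -/
def shuffles {I : Type*} : List I → List I → Multiset (List I)
  | [], w => {w}
  | x :: v, [] => {x :: v}
  | x :: v, y :: w =>
      ((shuffles v (y :: w)).map (x :: ·)) + ((shuffles (x :: v) w).map (y :: ·))
  termination_by v w => v.length + w.length

/-- The variable `X (χ(A, B))` of the polynomial ring `MvPolynomial (WordPair I) C`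
(`0` in the degenerate case of an empty word, which never occurs below). -/
noncomputable def Xchi {I : Type*} [LinearOrder I] (C : Type*) [CommRing C]
    (A B : List I) : MvPolynomial (WordPair I) C :=
  if h : A ≠ [] ∧ B ≠ [] then MvPolynomial.X (chi A B h.1 h.2) else 0

/-- `Σ_{U ∈ sh(A,B)} X(χ(U, W))`, with multiplicity. -/
noncomputable def shSumR {I : Type*} [LinearOrder I] (C : Type*) [CommRing C]
    (A B W : List I) : MvPolynomial (WordPair I) C :=
  ((shuffles A B).map fun U => Xchi C U W).sum

/-- `Σ_{U ∈ sh(A,B)} X(χ(V, U))`, with multiplicity. -/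
noncomputable def shSumL {I : Type*} [LinearOrder I] (C : Type*) [CommRing C]
    (V A B : List I) : MvPolynomial (WordPair I) C :=
  ((shuffles A B).map fun U => Xchi C V U).sum

/-- The defining relation `r(V1, V2, V3)` of the ring of constants `C₂` of the free
integro-differential ring, as a polynomial in `MvPolynomial (WordPair I) C`. -/
noncomputable def rPoly {I : Type*} [LinearOrder I] (C : Type*) [CommRing C]
    (V1 V2 V3 : List I) : MvPolynomial (WordPair I) C :=
  shSumR C V1 V2 V3 - shSumL C V1 V2 V3
  + ∑ j ∈ Finset.range V2.length,
      ((∑ i ∈ Finset.Ico (1 - j) V1.length,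
          Xchi C (V1.drop i) (V2.drop j) * shSumR C (V1.take i) (V2.take j) V3)
        - ∑ k ∈ Finset.Ico (1 - j) V3.length,
          shSumL C V1 (V2.take j) (V3.take k) * Xchi C (V2.drop j) (V3.drop k))

/-- A word is a Lyndon word iff it is nonempty and lexicographically smaller than each of
its proper nonempty suffixes. -/
def IsLyndonWord {I : Type*} [LinearOrder I] (V : List I) : Prop :=
  V ≠ [] ∧ ∀ A U : List I, A ≠ [] → U ≠ [] → V = A ++ U → V < U


/-! Order the variables `X (V, W)` by total length, then `V`, then `W` (words compared by
`dlex`); on pairs of bounded length over a fixed finite alphabet this order is well founded.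
Every pair `q` outside `Sgood` is the leading variable `χ(M, D)` of a relation `r(A, B, D)`
with `A <dlex D` and `M` the lexicographically greatest shuffle of `A` and `B`: if `q.1` is not
Lyndon, take `D = q.2` and `q.1 = A ++ B` with `B` its least proper suffix; otherwise the
failure of goodness provides `A, B` with `D = q.1`, `M = q.2`. In `r(A, B, D)` the variable
`X (χ(M, D))` occurs linearly with coefficient the multiplicity of `M` in `sh(A, B)`, a unit
because `ℚ ⊆ C`, and every other variable is smaller: `χ(U, D)` for the other shuffles `U < M`,
`χ(A, U)` because its first component is `≤dlex A <dlex` that of `χ(M, D)`, and the quadratic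
terms because they are shorter. Induction along the order expresses each variable modulo `J`
through the good ones. -/

section ListLex

variable {I : Type*} [LinearOrder I]

/- Core's `List.cons_le_cons_iff` and `List.append_left_le` concern core's `≤` on lists
(`¬ l₂ < l₁`), which does not unify with the `≤` of Mathlib's `LinearOrder (List I)`. -/

theorem List.cons_le_cons_iff' {a b : I} {u v : List I} :
    a :: u ≤ b :: v ↔ a < b ∨ a = b ∧ u ≤ v := by
  rw [← not_lt, List.cons_lt_cons_iff, ← not_lt]
  rcases lt_trichotomy a b with h | rfl | h
  · simp [h, h.ne', h.not_gt]
  · simp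
  · simp [h, h.ne', h.not_gt]

theorem List.append_le_append_left_iff' {P u v : List I} : P ++ u ≤ P ++ v ↔ u ≤ v := by
  refine ⟨fun h => not_lt.1 fun h' => (List.append_left_lt h').not_ge h, fun h => ?_⟩
  rcases h.lt_or_eq with h | rfl
  · exact (List.append_left_lt h).le
  · exact le_rfl

theorem List.exists_eq_append_of_lt_of_le_append :
    ∀ {D U X : List I}, D < U → U ≤ D ++ X → ∃ w, w ≠ [] ∧ U = D ++ w
  | [], U, _, hlt, _ => ⟨U, by rintro rfl; exact List.not_lt_nil _ hlt, rfl⟩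
  | _ :: _, [], _, hlt, _ => absurd hlt (List.not_lt_nil _)
  | d :: D, u :: U, X, hlt, hle => by
    rw [List.cons_append, List.cons_le_cons_iff'] at hle
    rw [List.cons_lt_cons_iff] at hlt
    rcases hlt with hdu | ⟨rfl, hlt⟩
    · rcases hle with hud | ⟨rfl, -⟩
      · exact absurd (hdu.trans hud) (lt_irrefl _)
      · exact absurd hdu (lt_irrefl _)
    · obtain ⟨w, hw, rfl⟩ := List.exists_eq_append_of_lt_of_le_append hlt
        (hle.resolve_left (lt_irrefl _)).2
      exact ⟨w, hw, rfl⟩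

end ListLex

section Shuffles

variable {I : Type*}

theorem shuffles_nil_left (w : List I) : shuffles [] w = {w} := by
  rw [shuffles]

theorem shuffles_nil_right (v : List I) : shuffles v [] = {v} := by
  cases v <;> rw [shuffles]

theorem mem_shuffles_cons_cons {x y : I} {v w S : List I} :
    S ∈ shuffles (x :: v) (y :: w) ↔
      (∃ T ∈ shuffles v (y :: w), S = x :: T) ∨
        (∃ T ∈ shuffles (x :: v) w, S = y :: T) := by
  rw [shuffles]
  simp only [Multiset.mem_add, Multiset.mem_map, eq_comm]

theorem perm_append_of_mem_shuffles : ∀ {v w S : List I}, S ∈ shuffles v w → S.Perm (v ++ w)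
  | [], w, S, h => by simp_all [shuffles_nil_left]
  | x :: v, [], S, h => by simp_all [shuffles_nil_right]
  | x :: v, y :: w, S, h => by
    rcases mem_shuffles_cons_cons.1 h with ⟨T, hT, rfl⟩ | ⟨T, hT, rfl⟩
    · exact (perm_append_of_mem_shuffles hT).cons x
    · exact ((perm_append_of_mem_shuffles hT).cons y).trans List.perm_middle.symm

theorem length_of_mem_shuffles {v w S : List I} (h : S ∈ shuffles v w) :
    S.length = v.length + w.length := by
  simpa using (perm_append_of_mem_shuffles h).length_eq

theorem subset_of_mem_shuffles {v w S F : List I} (h : S ∈ shuffles v w) (hv : v ⊆ F)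
    (hw : w ⊆ F) : S ⊆ F :=
  fun _ ha => List.append_subset.2 ⟨hv, hw⟩ ((perm_append_of_mem_shuffles h).subset ha)

theorem append_mem_shuffles : ∀ v w : List I, v ++ w ∈ shuffles v w
  | [], w => by simp [shuffles_nil_left]
  | x :: v, [] => by simp [shuffles_nil_right]
  | x :: v, y :: w => mem_shuffles_cons_cons.2 (Or.inl ⟨_, append_mem_shuffles v (y :: w), rfl⟩)

theorem append_mem_shuffles_swap : ∀ v w : List I, w ++ v ∈ shuffles v w
  | [], w => by simp [shuffles_nil_left]
  | x :: v, [] => by simp [shuffles_nil_right]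
  | x :: v, y :: w =>
    mem_shuffles_cons_cons.2 (Or.inr ⟨_, append_mem_shuffles_swap (x :: v) w, rfl⟩)

end Shuffles

section MaxShuffle

variable {I : Type*} [LinearOrder I]

theorem exists_ge_mem_shuffles_prefix_swap :
    ∀ (p : List I) {x y : List I}, y ≤ x →
      ∀ S ∈ shuffles (p ++ x) y, ∃ T ∈ shuffles x (p ++ y), S ≤ T
  | [], _, _, _, S, hS => ⟨S, hS, le_rfl⟩
  | b :: p, x, [], _, S, hS => by
    rw [shuffles_nil_right, Multiset.mem_singleton] at hS
    exact ⟨S, by simpa [hS] using append_mem_shuffles_swap x (b :: p), le_rfl⟩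
  | _ :: _, [], e :: y, hyx, _, _ => absurd hyx (not_le.2 (List.nil_lt_cons e y))
  | b :: p, d :: x, e :: y, hyx, S, hS => by
    rw [List.cons_append, mem_shuffles_cons_cons] at hS
    rcases hS with ⟨T₀, hT₀, rfl⟩ | ⟨T₀, hT₀, rfl⟩
    · obtain ⟨T, hT, hle⟩ := exists_ge_mem_shuffles_prefix_swap p hyx T₀ hT₀
      exact ⟨b :: T, mem_shuffles_cons_cons.2 (Or.inr ⟨T, hT, rfl⟩),
        List.cons_le_cons_iff'.2 (Or.inr ⟨rfl, hle⟩)⟩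
    · rcases List.cons_le_cons_iff'.1 hyx with hed | ⟨rfl, htail⟩
      · refine ⟨d :: (x ++ b :: p ++ e :: y), ?_, (List.cons_lt_cons_iff.2 (Or.inl hed)).le⟩
        exact mem_shuffles_cons_cons.2 (Or.inl ⟨_, append_mem_shuffles x _, by simp⟩)
      · obtain ⟨T, hT, hle⟩ := exists_ge_mem_shuffles_prefix_swap (b :: p ++ [e]) htail T₀
          (by simpa using hT₀)
        exact ⟨e :: T, mem_shuffles_cons_cons.2 (Or.inl ⟨T, by simpa using hT, rfl⟩),
          List.cons_le_cons_iff'.2 (Or.inr ⟨rfl, hle⟩)⟩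
termination_by p x y => 3 * p.length + 2 * (x.length + y.length)

theorem le_append_of_mem_shuffles :
    ∀ {x y : List I}, (∀ i < x.length, y ≤ x.drop i) → ∀ S ∈ shuffles x y, S ≤ x ++ y
  | [], _, _, S, hS => by simp_all [shuffles_nil_left]
  | _ :: _, [], _, S, hS => by simp_all [shuffles_nil_right]
  | a :: x, b :: y, h, S, hS => by
    have htail : ∀ i < x.length, b :: y ≤ x.drop i := fun i hi => by
      simpa using h (i + 1) (by simpa using hi)
    rcases mem_shuffles_cons_cons.1 hS with ⟨T, hT, rfl⟩ | ⟨T, hT, rfl⟩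
    · exact List.cons_le_cons_iff'.2 (Or.inr ⟨rfl, le_append_of_mem_shuffles htail T hT⟩)
    · rcases List.cons_le_cons_iff'.1 (by simpa using h 0 (by simp)) with hba | ⟨rfl, hyx⟩
      · exact (List.cons_lt_cons_iff.2 (Or.inl hba)).le
      · obtain ⟨T₁, hT₁, hle⟩ := exists_ge_mem_shuffles_prefix_swap [b] hyx T hT
        exact List.cons_le_cons_iff'.2
          (Or.inr ⟨rfl, hle.trans (le_append_of_mem_shuffles htail T₁ hT₁)⟩)

theorem drop_le_drop_take_of_forall_drop_le {V : List I} {i₀ : ℕ} (hi₀ : i₀ ≤ V.length)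
    (hmin : ∀ j < V.length, V.drop i₀ ≤ V.drop j) :
    ∀ i < i₀, V.drop i₀ ≤ (V.take i₀).drop i := by
  intro i hi
  by_contra! hlt
  set s := (V.take i₀).drop i
  have hslen : s.length = i₀ - i := by simp [s]; omega
  have hle : V.drop i₀ ≤ s ++ V.drop i₀ := by
    rw [← List.drop_append_of_le_length (by simp; omega), List.take_append_drop]
    exact hmin i (by omega)
  obtain ⟨w, hw, hUw⟩ := List.exists_eq_append_of_lt_of_le_append hlt hle
  have hwU : w ≤ V.drop i₀ := by
    rw [← List.append_le_append_left_iff' (P := s), ← hUw]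
    exact hle
  have hw_drop : V.drop (i₀ + s.length) = w := by
    rw [← List.drop_drop, hUw, List.drop_left]
  have hUw' : V.drop i₀ ≤ w := by
    rw [← hw_drop]
    refine hmin _ (not_le.1 fun h => hw ?_)
    rw [← hw_drop, List.drop_eq_nil_iff]
    exact h
  have := congrArg List.length hUw
  rw [List.length_append, le_antisymm hwU hUw'] at this
  omega

/-- A non-Lyndon word `V` is the greatest shuffle of the factors of `V = A ++ U`, where `U` is
its lexicographically least proper suffix. -/
theorem exists_append_forall_shuffles_le_of_not_isLyndonWord {V : List I} (hV : V ≠ [])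
    (hnl : ¬ IsLyndonWord V) :
    ∃ A U, A ≠ [] ∧ U ≠ [] ∧ V = A ++ U ∧ ∀ S ∈ shuffles A U, S ≤ V := by
  obtain ⟨A₀, U₀, hA₀, hU₀, hV₀, hU₀V⟩ :
      ∃ A₀ U₀, A₀ ≠ [] ∧ U₀ ≠ [] ∧ V = A₀ ++ U₀ ∧ U₀ ≤ V := by
    simpa [IsLyndonWord, hV] using hnl
  have hA₀len : 0 < A₀.length := List.length_pos_iff.2 hA₀
  have hU₀len : 0 < U₀.length := List.length_pos_iff.2 hU₀
  have hVlen : V.length = A₀.length + U₀.length := by simp [hV₀]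
  obtain ⟨i₀, hi₀, hmin⟩ := Finset.exists_min_image (Finset.Ico 1 V.length) (V.drop ·)
    ⟨A₀.length, Finset.mem_Ico.2 ⟨hA₀len, by omega⟩⟩
  simp only [Finset.mem_Ico, and_imp] at hi₀ hmin
  have hUV : V.drop i₀ ≤ V :=
    (hmin A₀.length hA₀len (by omega)).trans (by simpa [hV₀] using hU₀V)
  have hmin' : ∀ j < V.length, V.drop i₀ ≤ V.drop j := fun j hj => by
    rcases Nat.eq_zero_or_pos j with rfl | hj0
    · simpa using hUV
    · exact hmin j hj0 hj
  refine ⟨V.take i₀, V.drop i₀, ?_, ?_, (List.take_append_drop i₀ V).symm, fun S hS => ?_⟩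
  · exact List.ne_nil_of_length_pos (by simp; omega)
  · exact List.ne_nil_of_length_pos (by simp; omega)
  · rw [← List.take_append_drop i₀ V]
    refine le_append_of_mem_shuffles (fun i hi => ?_) S hS
    exact drop_le_drop_take_of_forall_drop_le hi₀.2.le hmin' i
      (hi.trans_le (List.length_take_le _ _))

end MaxShuffle

section WordPairs

def dlexKey {I : Type*} (V : List I) : ℕ ×ₗ List I := toLex (V.length, V)

theorem dlexKey_injective {I : Type*} : Function.Injective (dlexKey (I := I)) := fun _ _ h =>
  congrArg Prod.snd (toLex.injective h)

variable {I : Type*} [LinearOrder I]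

theorem dlexLt_iff_dlexKey_lt {V W : List I} : DlexLt V W ↔ dlexKey V < dlexKey W := by
  rw [dlexKey, dlexKey, Prod.Lex.toLex_lt_toLex]; rfl

theorem dlexLe_iff_dlexKey_le {V W : List I} : DlexLe V W ↔ dlexKey V ≤ dlexKey W := by
  rw [DlexLe, dlexLt_iff_dlexKey_lt, le_iff_lt_or_eq, dlexKey_injective.eq_iff]

def pairKey (p : WordPair I) : ℕ ×ₗ (ℕ ×ₗ List I) ×ₗ (ℕ ×ₗ List I) :=
  toLex (p.val.1.length + p.val.2.length, toLex (dlexKey p.val.1, dlexKey p.val.2))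

theorem pairLt_iff_pairKey_lt {p q : WordPair I} : PairLt p q ↔ pairKey p < pairKey q := by
  simp only [PairLt, pairKey, Prod.Lex.toLex_lt_toLex, dlexLt_iff_dlexKey_lt,
    dlexKey_injective.eq_iff]

theorem DlexLe.length_le {V W : List I} (h : DlexLe V W) : V.length ≤ W.length := by
  rcases h with (h | ⟨h, -⟩) | rfl <;> omega

theorem total_le_of_pairLt {p q : WordPair I} (h : PairLt p q) :
    p.val.1.length + p.val.2.length ≤ q.val.1.length + q.val.2.length := by
  rcases h with h | ⟨h, -⟩ <;> omega

theorem chi_val {A B : List I} (hA : A ≠ []) (hB : B ≠ []) :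
    (chi A B hA hB).val = if DlexLe A B then (A, B) else (B, A) := by
  unfold chi; split_ifs <;> rfl

theorem chi_val_eq_or {A B : List I} (hA : A ≠ []) (hB : B ≠ []) :
    (chi A B hA hB).val = (A, B) ∨ (chi A B hA hB).val = (B, A) := by
  rw [chi_val]; split_ifs <;> simp

theorem chi_total {A B : List I} (hA : A ≠ []) (hB : B ≠ []) :
    (chi A B hA hB).val.1.length + (chi A B hA hB).val.2.length = A.length + B.length := by
  rcases chi_val_eq_or hA hB with h | h <;> simp [h, add_comm]

theorem chi_subset {A B F : List I} (hA : A ≠ []) (hB : B ≠ []) (hAF : A ⊆ F)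
    (hBF : B ⊆ F) :
    (chi A B hA hB).val.1 ⊆ F ∧ (chi A B hA hB).val.2 ⊆ F := by
  rcases chi_val_eq_or hA hB with h | h <;> simp [h, hAF, hBF]

theorem chi_eq_of_val_eq_or {A B : List I} (hA : A ≠ []) (hB : B ≠ []) {q : WordPair I}
    (hq : q.val = (A, B) ∨ q.val = (B, A)) : chi A B hA hB = q := by
  obtain ⟨-, -, hq12⟩ := q.property
  apply Subtype.ext
  rw [chi_val]
  rcases hq with hq | hq <;> rw [hq] at hq12 ⊢ <;> split_ifs with hAB
  · rfl
  · exact absurd hq12 hAB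
  · rw [dlexLe_iff_dlexKey_le] at hq12 hAB
    rw [dlexKey_injective (le_antisymm hAB hq12)]
  · rfl

theorem pairLt_chi_of_dlexLt {A U : List I} (hA : A ≠ []) (hU : U ≠ []) {q : WordPair I}
    (htot : A.length + U.length = q.val.1.length + q.val.2.length)
    (hAq : DlexLt A q.val.1) : PairLt (chi A U hA hU) q := by
  refine Or.inr ⟨by rw [chi_total, htot], Or.inl ?_⟩
  rw [dlexLt_iff_dlexKey_lt] at hAq ⊢
  refine lt_of_le_of_lt ?_ hAq
  rw [chi_val]
  split_ifs with h
  · exact le_rfl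
  · exact (not_le.1 (dlexLe_iff_dlexKey_le.not.1 h)).le

theorem pairLt_chi_chi_of_lt {U M D : List I} (hU : U ≠ []) (hM : M ≠ []) (hD : D ≠ [])
    (hlen : U.length = M.length) (hUM : U < M) :
    PairLt (chi U D hU hD) (chi M D hM hD) := by
  have hkey : dlexKey U < dlexKey M := dlexLt_iff_dlexKey_lt.1 (Or.inr ⟨hlen, hUM⟩)
  refine Or.inr ⟨by rw [chi_total, chi_total, hlen], ?_⟩
  rw [chi_val, chi_val]
  simp only [dlexLe_iff_dlexKey_le, dlexLt_iff_dlexKey_lt]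
  split_ifs with h1 h2 h2
  · exact Or.inl hkey
  · rcases h1.lt_or_eq with h1 | h1
    · exact Or.inl h1
    · exact Or.inr ⟨dlexKey_injective h1, not_le.1 h2⟩
  · exact absurd (h2.trans' hkey.le) h1
  · exact Or.inr ⟨rfl, hkey⟩

end WordPairs

section Finiteness

variable {I : Type*} [LinearOrder I]

theorem List.finite_setOf_length_le_subset (F : List I) (N : ℕ) :
    {l : List I | l.length ≤ N ∧ l ⊆ F}.Finite := by
  refine ((List.finite_length_le {a // a ∈ F} N).image (List.map Subtype.val)).subset ?_
  rintro l ⟨hN, hF⟩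
  exact ⟨l.attach.map fun a => ⟨a.1, hF a.2⟩, by simpa using hN, by simp⟩

theorem finite_setOf_wordPair (F : List I) (N : ℕ) :
    {p : WordPair I | p.val.1.length + p.val.2.length ≤ N ∧ p.val.1 ⊆ F ∧ p.val.2 ⊆ F}
      |>.Finite := by
  have hL := List.finite_setOf_length_le_subset F N
  refine ((hL.prod hL).preimage Subtype.val_injective.injOn).subset ?_
  rintro p ⟨hN, h1, h2⟩
  exact ⟨⟨by omega, h1⟩, ⟨by omega, h2⟩⟩

theorem wellFoundedOn_pairLt (F : List I) (N : ℕ) :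
    {p : WordPair I | p.val.1.length + p.val.2.length ≤ N ∧ p.val.1 ⊆ F ∧ p.val.2 ⊆ F}
      |>.WellFoundedOn PairLt := by
  have hPairLt : (PairLt : WordPair I → WordPair I → Prop) =
      fun p q => pairKey p < pairKey q := by
    ext; exact pairLt_iff_pairKey_lt
  rw [hPairLt, ← Set.wellFoundedOn_image]
  exact ((finite_setOf_wordPair F N).image _).wellFoundedOn

end Finiteness

section Relations

variable {I : Type*} [LinearOrder I] (C : Type*) [CommRing C]

def pairsBelow (q : WordPair I) (F : List I) : Set (WordPair I) :=
  {p | PairLt p q ∧ p.val.1 ⊆ F ∧ p.val.2 ⊆ F}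

noncomputable def adjoinBelow (q : WordPair I) (F : List I) :
    Subalgebra C (MvPolynomial (WordPair I) C) :=
  Algebra.adjoin C (MvPolynomial.X '' pairsBelow q F)

noncomputable def rPolyQuadratic (V1 V2 V3 : List I) : MvPolynomial (WordPair I) C :=
  ∑ j ∈ Finset.range V2.length,
    ((∑ i ∈ Finset.Ico (1 - j) V1.length,
        Xchi C (V1.drop i) (V2.drop j) * shSumR C (V1.take i) (V2.take j) V3)
      - ∑ k ∈ Finset.Ico (1 - j) V3.length,
        shSumL C V1 (V2.take j) (V3.take k) * Xchi C (V2.drop j) (V3.drop k))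

theorem rPoly_eq (V1 V2 V3 : List I) :
    rPoly C V1 V2 V3 = shSumR C V1 V2 V3 - shSumL C V1 V2 V3 + rPolyQuadratic C V1 V2 V3 :=
  rfl

variable {C}

theorem Xchi_eq_X {A B : List I} (hA : A ≠ []) (hB : B ≠ []) :
    Xchi C A B = MvPolynomial.X (chi A B hA hB) :=
  dif_pos ⟨hA, hB⟩

theorem shSumR_eq_count_nsmul_add (A B D M : List I) :
    shSumR C A B D = (shuffles A B).count M • Xchi C M D +
      (((shuffles A B).filter (· ≠ M)).map fun U => Xchi C U D).sum := by
  conv_lhs => rw [shSumR, ← Multiset.filter_add_not (· = M) (shuffles A B)]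
  rw [Multiset.map_add, Multiset.sum_add, Multiset.filter_eq', Multiset.map_replicate,
    Multiset.sum_replicate]

section Membership

variable {q : WordPair I} {F : List I}

theorem Xchi_mem_adjoinBelow {Y Z : List I} (hY : Y ⊆ F) (hZ : Z ⊆ F)
    (hlt : ∀ hY₀ hZ₀, PairLt (chi Y Z hY₀ hZ₀) q) : Xchi C Y Z ∈ adjoinBelow C q F := by
  unfold Xchi
  split_ifs with h
  · exact Algebra.subset_adjoin ⟨_, ⟨hlt h.1 h.2, chi_subset h.1 h.2 hY hZ⟩, rfl⟩
  · exact zero_mem _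

theorem Xchi_mem_adjoinBelow_of_length_lt {Y Z : List I} (hY : Y ⊆ F) (hZ : Z ⊆ F)
    (hlen : Y.length + Z.length < q.val.1.length + q.val.2.length) :
    Xchi C Y Z ∈ adjoinBelow C q F :=
  Xchi_mem_adjoinBelow hY hZ fun hY₀ hZ₀ => Or.inl (by rwa [chi_total])

theorem shSumR_mem_adjoinBelow_of_length_lt {A B W : List I} (hA : A ⊆ F) (hB : B ⊆ F)
    (hW : W ⊆ F) (hlen : A.length + B.length + W.length < q.val.1.length + q.val.2.length) :
    shSumR C A B W ∈ adjoinBelow C q F :=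
  Subalgebra.multiset_sum_mem _ <| Multiset.forall_mem_map_iff.2 fun _ hU =>
    Xchi_mem_adjoinBelow_of_length_lt (subset_of_mem_shuffles hU hA hB) hW
      (by rwa [length_of_mem_shuffles hU])

theorem shSumL_mem_adjoinBelow_of_length_lt {V A B : List I} (hV : V ⊆ F) (hA : A ⊆ F)
    (hB : B ⊆ F) (hlen : V.length + A.length + B.length < q.val.1.length + q.val.2.length) :
    shSumL C V A B ∈ adjoinBelow C q F :=
  Subalgebra.multiset_sum_mem _ <| Multiset.forall_mem_map_iff.2 fun _ hU =>
    Xchi_mem_adjoinBelow_of_length_lt hV (subset_of_mem_shuffles hU hA hB)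
      (by rw [length_of_mem_shuffles hU]; omega)

theorem rPolyQuadratic_mem_adjoinBelow {A B D : List I} (hA : A ⊆ F) (hB : B ⊆ F)
    (hD : D ⊆ F) (hlen : A.length + B.length + D.length ≤ q.val.1.length + q.val.2.length) :
    rPolyQuadratic C A B D ∈ adjoinBelow C q F := by
  refine sum_mem fun j hj => sub_mem (sum_mem fun i hi => ?_) (sum_mem fun k hk => ?_)
  · simp only [Finset.mem_range, Finset.mem_Ico] at hj hi
    refine mul_mem ?_ ?_
    · exact Xchi_mem_adjoinBelow_of_length_lt (List.Subset.trans (List.drop_subset _ _) hA)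
        (List.Subset.trans (List.drop_subset _ _) hB) (by simp only [List.length_drop]; omega)
    · exact shSumR_mem_adjoinBelow_of_length_lt (List.Subset.trans (List.take_subset _ _) hA)
        (List.Subset.trans (List.take_subset _ _) hB) hD (by simp only [List.length_take]; omega)
  · simp only [Finset.mem_range, Finset.mem_Ico] at hj hk
    refine mul_mem ?_ ?_
    · exact shSumL_mem_adjoinBelow_of_length_lt hA (List.Subset.trans (List.take_subset _ _) hB)
        (List.Subset.trans (List.take_subset _ _) hD) (by simp only [List.length_take]; omega)
    · exact Xchi_mem_adjoinBelow_of_length_lt (List.Subset.trans (List.drop_subset _ _) hB)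
        (List.Subset.trans (List.drop_subset _ _) hD) (by simp only [List.length_drop]; omega)

end Membership

end Relations

section Leading

variable {I : Type*} [LinearOrder I] {C : Type*} [CommRing C]

/-- `q = χ(M, D)` is the leading variable of the relation `r(A, B, D)`. -/
def IsLeadingPair (q : WordPair I) : Prop :=
  ∃ A B D M : List I, A ≠ [] ∧ B ≠ [] ∧ D ≠ [] ∧ DlexLt A D ∧ M ∈ shuffles A B ∧
    (∀ U ∈ shuffles A B, U ≤ M) ∧ (q.val = (M, D) ∨ q.val = (D, M))

theorem rPoly_sub_count_nsmul_X_mem_adjoinBelow {A B D M F : List I} (hA : A ≠ [])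
    (hB : B ≠ []) (hD : D ≠ []) (hAD : DlexLt A D) (hM : M ∈ shuffles A B)
    (hmax : ∀ U ∈ shuffles A B, U ≤ M)
    (hAF : A ⊆ F) (hBF : B ⊆ F) (hDF : D ⊆ F) {q : WordPair I}
    (hq : q.val = (M, D) ∨ q.val = (D, M)) :
    rPoly C A B D - (shuffles A B).count M • MvPolynomial.X q ∈ adjoinBelow C q F := by
  have hMlen : M.length = A.length + B.length := length_of_mem_shuffles hM
  have hAlen : 0 < A.length := List.length_pos_iff.2 hA
  have hBlen : 0 < B.length := List.length_pos_iff.2 hB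
  have hMne : M ≠ [] := List.ne_nil_of_length_pos (by omega)
  have hchi : chi M D hMne hD = q := chi_eq_of_val_eq_or hMne hD hq
  have htot : q.val.1.length + q.val.2.length = A.length + B.length + D.length := by
    rw [← hchi, chi_total, hMlen]
  have hrest : (((shuffles A B).filter (· ≠ M)).map fun U => Xchi C U D).sum ∈
      adjoinBelow C q F := by
    refine Subalgebra.multiset_sum_mem _ <| Multiset.forall_mem_map_iff.2 fun U hU => ?_
    obtain ⟨hU, hUM⟩ := Multiset.mem_filter.1 hU
    have hUlen := length_of_mem_shuffles hU
    refine Xchi_mem_adjoinBelow (subset_of_mem_shuffles hU hAF hBF) hDF fun hU₀ _ => ?_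
    rw [← hchi]
    exact pairLt_chi_chi_of_lt hU₀ hMne hD (by omega) ((hmax U hU).lt_of_ne hUM)
  have hL : shSumL C A B D ∈ adjoinBelow C q F := by
    refine Subalgebra.multiset_sum_mem _ <| Multiset.forall_mem_map_iff.2 fun U hU => ?_
    have hUlen := length_of_mem_shuffles hU
    refine Xchi_mem_adjoinBelow hAF (subset_of_mem_shuffles hU hBF hDF) fun hA₀ hU₀ => ?_
    refine pairLt_chi_of_dlexLt hA₀ hU₀ (by omega) ?_
    rcases hq with hq | hq <;> rw [hq]
    · exact Or.inl (show A.length < M.length by omega)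
    · exact hAD
  rw [rPoly_eq, shSumR_eq_count_nsmul_add A B D M, Xchi_eq_X hMne hD, hchi]
  convert add_mem (sub_mem hrest hL) (rPolyQuadratic_mem_adjoinBelow hAF hBF hDF htot.ge) using 1
  abel

end Leading

theorem Subalgebra.mem_of_nsmul_mem {C R : Type*} [CommSemiring C] [Algebra ℚ C] [Semiring R]
    [Algebra C R] (S : Subalgebra C R) {n : ℕ} (hn : n ≠ 0) {x : R} (h : n • x ∈ S) :
    x ∈ S := by
  have hinv : algebraMap ℚ C (n : ℚ)⁻¹ * n = 1 := by
    rw [← map_natCast (algebraMap ℚ C), ← map_mul, inv_mul_cancel₀ (by exact_mod_cast hn),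
      map_one]
  simpa [← Nat.cast_smul_eq_nsmul C, smul_smul, hinv] using
    S.smul_mem h (algebraMap ℚ C (n : ℚ)⁻¹)

theorem MvPolynomial.algHom_apply_mem_of_forall_X_mem {σ C R : Type*} [CommSemiring C]
    [CommSemiring R] [Algebra C R] (φ : MvPolynomial σ C →ₐ[C] R) (S : Subalgebra C R)
    (h : ∀ i, φ (X i) ∈ S) (f : MvPolynomial σ C) : φ f ∈ S := by
  rw [MvPolynomial.aeval_unique φ]
  refine Algebra.adjoin_le (Set.range_subset_iff.2 h) ?_
  rw [← MvPolynomial.aeval_range]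
  exact AlgHom.mem_range_self _ f

section Generation

variable {I : Type*} [LinearOrder I]

def IsGoodPair (p : WordPair I) : Prop :=
  IsLyndonWord p.val.1 ∧
    ¬ ∃ W1 W2 : List I, W1 ≠ [] ∧ W2 ≠ [] ∧ DlexLt W1 p.val.1 ∧
      p.val.2 ∈ shuffles W1 W2 ∧ ∀ U ∈ shuffles W1 W2, U ≤ p.val.2

theorem isLeadingPair_of_not_isGoodPair {q : WordPair I} (h : ¬ IsGoodPair q) :
    IsLeadingPair q := by
  obtain ⟨hq₁, hq₂, hq₁₂⟩ := q.property
  by_cases hL : IsLyndonWord q.val.1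
  · obtain ⟨W1, W2, hW1, hW2, hlt, hmem, hmax⟩ := not_not.1 (not_and.1 h hL)
    exact ⟨W1, W2, q.val.1, q.val.2, hW1, hW2, hq₁, hlt, hmem, hmax, Or.inr rfl⟩
  · obtain ⟨A, U, hA, hU, hq, hmax⟩ :=
      exists_append_forall_shuffles_le_of_not_isLyndonWord hq₁ hL
    have hlen : A.length < q.val.2.length :=
      calc A.length < q.val.1.length := by simp [hq, List.length_pos_iff.2 hU]
        _ ≤ q.val.2.length := hq₁₂.length_le
    exact ⟨A, U, q.val.2, q.val.1, hA, hU, hq₂, Or.inl hlen, hq ▸ append_mem_shuffles A U,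
      hmax, Or.inl rfl⟩

variable {C R : Type*} [CommRing C] [Algebra ℚ C] [CommRing R] [Algebra C R]
  (φ : MvPolynomial (WordPair I) C →ₐ[C] R) (S : Subalgebra C R)

theorem map_X_mem_of_isLeadingPair
    (hφ : ∀ V1 V2 V3 : List I, V1 ≠ [] → V2 ≠ [] → V3 ≠ [] → DlexLt V1 V3 →
      φ (rPoly C V1 V2 V3) = 0)
    {q : WordPair I} {F : List I} (hqF : q.val.1 ⊆ F ∧ q.val.2 ⊆ F) (hq : IsLeadingPair q)
    (hbelow : ∀ p ∈ pairsBelow q F, φ (MvPolynomial.X p) ∈ S) :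
    φ (MvPolynomial.X q) ∈ S := by
  obtain ⟨A, B, D, M, hA, hB, hD, hAD, hM, hmax, hqMD⟩ := hq
  obtain ⟨hMF, hDF⟩ : M ⊆ F ∧ D ⊆ F := by
    rcases hqMD with h | h <;> rw [h] at hqF
    · exact hqF
    · exact hqF.symm
  have hABF : A ++ B ⊆ F := List.Subset.trans (perm_append_of_mem_shuffles hM).symm.subset hMF
  have hAF : A ⊆ F := List.Subset.trans (List.subset_append_left A B) hABF
  have hBF : B ⊆ F := List.Subset.trans (List.subset_append_right A B) hABF
  have hle : adjoinBelow C q F ≤ S.comap φ := Algebra.adjoin_le (Set.image_subset_iff.2 hbelow)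
  have h := hle (rPoly_sub_count_nsmul_X_mem_adjoinBelow hA hB hD hAD hM hmax hAF hBF hDF hqMD)
  rw [Subalgebra.mem_comap, map_sub, hφ A B D hA hB hD hAD, zero_sub, neg_mem_iff,
    map_nsmul] at h
  exact S.mem_of_nsmul_mem (Multiset.count_ne_zero.2 hM) h

theorem map_X_mem_of_isGoodPair
    (hφ : ∀ V1 V2 V3 : List I, V1 ≠ [] → V2 ≠ [] → V3 ≠ [] → DlexLt V1 V3 →
      φ (rPoly C V1 V2 V3) = 0)
    (hgood : ∀ q, IsGoodPair q → φ (MvPolynomial.X q) ∈ S) (q : WordPair I) :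
    φ (MvPolynomial.X q) ∈ S := by
  set F := q.val.1 ++ q.val.2
  have hqF : q.val.1 ⊆ F ∧ q.val.2 ⊆ F :=
    ⟨List.subset_append_left _ _, List.subset_append_right _ _⟩
  refine (wellFoundedOn_pairLt F _).induction (P := fun p => φ (MvPolynomial.X p) ∈ S)
    ⟨le_rfl, hqF⟩ fun p hp ih => ?_
  by_cases hgp : IsGoodPair p
  · exact hgood p hgp
  · refine map_X_mem_of_isLeadingPair φ S hφ hp.2 (isLeadingPair_of_not_isGoodPair hgp) ?_
    rintro p' ⟨hlt, hp'F⟩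
    exact ih p' ⟨(total_le_of_pairLt hlt).trans hp.1, hp'F⟩ hlt

end Generation

theorem stmt_12_general {I : Type*} [LinearOrder I] (C : Type*) [CommRing C] [Algebra ℚ C]
    (J : Ideal (MvPolynomial (WordPair I) C))
    (hJ : J = Ideal.span {r : MvPolynomial (WordPair I) C |
      ∃ V1 V2 V3 : List I, V1 ≠ [] ∧ V2 ≠ [] ∧ V3 ≠ [] ∧ DlexLt V1 V3 ∧
        r = rPoly C V1 V2 V3})
    (Sgood : Set (WordPair I))
    (hSgood : Sgood = {p : WordPair I | IsLyndonWord p.val.1 ∧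
      ¬ ∃ W1 W2 : List I, W1 ≠ [] ∧ W2 ≠ [] ∧ DlexLt W1 p.val.1 ∧
        p.val.2 ∈ shuffles W1 W2 ∧ ∀ U ∈ shuffles W1 W2, U ≤ p.val.2}) :
    ∀ f : MvPolynomial (WordPair I) C,
      ∃ g h : MvPolynomial (WordPair I) C,
        g ∈ Algebra.adjoin C (MvPolynomial.X '' Sgood) ∧ h ∈ J ∧ f = g + h := by
  intro f
  let φ := Ideal.Quotient.mkₐ C J
  let S := (Algebra.adjoin C (MvPolynomial.X '' Sgood)).map φ
  have hφ : ∀ V1 V2 V3 : List I, V1 ≠ [] → V2 ≠ [] → V3 ≠ [] → DlexLt V1 V3 →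
      φ (rPoly C V1 V2 V3) = 0 := fun V1 V2 V3 h1 h2 h3 h13 =>
    Ideal.Quotient.eq_zero_iff_mem.2 <|
      hJ ▸ Ideal.subset_span ⟨V1, V2, V3, h1, h2, h3, h13, rfl⟩
  have hgood : ∀ q, IsGoodPair q → φ (MvPolynomial.X q) ∈ S := fun q hq =>
    Subalgebra.mem_map.2 ⟨_, Algebra.subset_adjoin ⟨q, hSgood ▸ hq, rfl⟩, rfl⟩
  obtain ⟨g, hg, hgf⟩ := Subalgebra.mem_map.1 <| MvPolynomial.algHom_apply_mem_of_forall_X_mem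
    φ S (map_X_mem_of_isGoodPair φ S hφ hgood) f
  exact ⟨g, f - g, hg, Ideal.Quotient.eq.1 hgf.symm, by ring⟩

/-- Let `J` be the ideal of `MvPolynomial (WordPair I) C` generated by
the relations `r(V1,V2,V3)` for nonempty words `V1, V2, V3` with `V1 <dlex V3`, and let
`Sgood` be the set of pairs `(V, W)` such that `V` is a Lyndon word and `W` is not the
lexicographically greatest shuffle of two nonempty words `W1, W2` with `W1 <dlex V`.
Then every polynomial `f` decomposes as `f = g + h` with `g` in the `C`-subalgebra
generated by the variables `X p`, `p ∈ Sgood`, and `h ∈ J`; i.e. the quotient algebra is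
generated by the images of these variables. -/
theorem stmt_12 {I : Type*} [LinearOrder I] (C : Type*) [CommRing C] [Algebra ℚ C]
    [Nontrivial C]
    (J : Ideal (MvPolynomial (WordPair I) C))
    (hJ : J = Ideal.span {r : MvPolynomial (WordPair I) C |
      ∃ V1 V2 V3 : List I, V1 ≠ [] ∧ V2 ≠ [] ∧ V3 ≠ [] ∧ DlexLt V1 V3 ∧
        r = rPoly C V1 V2 V3})
    (Sgood : Set (WordPair I))
    (hSgood : Sgood = {p : WordPair I | IsLyndonWord p.val.1 ∧
      ¬ ∃ W1 W2 : List I, W1 ≠ [] ∧ W2 ≠ [] ∧ DlexLt W1 p.val.1 ∧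
        p.val.2 ∈ shuffles W1 W2 ∧ ∀ U ∈ shuffles W1 W2, U ≤ p.val.2}) :
    ∀ f : MvPolynomial (WordPair I) C,
      ∃ g h : MvPolynomial (WordPair I) C,
        g ∈ Algebra.adjoin C (MvPolynomial.X '' Sgood) ∧ h ∈ J ∧ f = g + h :=
  stmt_12_general C J hJ Sgood hSgood
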